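/- arXiv:2302.00218 — 2 statements merged into one kernel-verified Lean document; each statement's English description precedes it below -/
import Mathlib

section
/- The map A ↦ (U ↦ tr(AU)) is an isometric linear bijection from the trace class S₁(n) onto the subspace of C(U(n)) spanned by the coordinate functions e_{ij}, where S₁(n) carries the trace norm and the subspace carries the supremum norm over U(n). -/
/-!
Diagonalise `AᴴA = ∑ λᵢ eᵢeᵢᴴ` in an orthonormal eigenbasis `e`. The vectors `A eᵢ` are then
pairwise orthogonal with `‖A eᵢ‖ = √λᵢ`, so the trace norm is `∑ ‖A eᵢ‖`. Computing the trace in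
the basis `e` gives `tr (A U) = ∑ ⟪Uᴴ eᵢ, A eᵢ⟫`, which Cauchy–Schwarz bounds by `∑ ‖A eᵢ‖` since
`Uᴴ` is an isometry; equality holds for the unitary `U` with `Uᴴ eᵢ = A eᵢ / ‖A eᵢ‖` whenever
`A eᵢ ≠ 0`. Hence the sup norm of `U ↦ tr (A U)` is the trace norm, which gives injectivity, and
the matrix units `single j i 1` are sent to the coordinate functions `e_{ij}`.
-/

open MeasureTheory Matrix
open scoped ComplexOrder

/-- The trace norm (Schatten 1-norm) of a complex `n × n` matrix: the trace of the positive
semidefinite square root of `Aᴴ A`. -/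
noncomputable def traceNorm (n : ℕ) (A : Matrix (Fin n) (Fin n) ℂ) : ℝ :=
  (((Matrix.posSemidef_conjTranspose_mul_self A).1.eigenvectorUnitary.1 *
      diagonal (((↑) : ℝ → ℂ) ∘ (√·) ∘ (Matrix.posSemidef_conjTranspose_mul_self A).1.eigenvalues) *
      (star (Matrix.posSemidef_conjTranspose_mul_self A).1.eigenvectorUnitary :
        Matrix (Fin n) (Fin n) ℂ)).trace).re

open scoped InnerProductSpace

section OrthonormalBasis

variable {𝕜 E ι : Type*} [RCLike 𝕜] [NormedAddCommGroup E] [InnerProductSpace 𝕜 E] [Fintype ι]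

theorem exists_orthonormalBasis_inner_eq_norm [FiniteDimensional 𝕜 E]
    (h : Module.finrank 𝕜 E = Fintype.card ι) {f : ι → E}
    (hf : Pairwise fun i j => ⟪f i, f j⟫_𝕜 = 0) :
    ∃ b : OrthonormalBasis ι 𝕜 E, ∀ i, ⟪b i, f i⟫_𝕜 = ‖f i‖ := by
  set v : ι → E := fun i => (‖f i‖⁻¹ : 𝕜) • f i
  have hv : Orthonormal 𝕜 ({i | f i ≠ 0}.domRestrict v) := by
    refine ⟨fun ⟨i, hi⟩ => ?_, fun ⟨i, _⟩ ⟨j, _⟩ hij => ?_⟩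
    · simp [v, norm_smul, inv_mul_cancel₀ (norm_ne_zero_iff.mpr hi)]
    · simp [v, inner_smul_left, inner_smul_right, hf (Subtype.coe_ne_coe.mpr hij)]
  obtain ⟨b, hb⟩ := hv.exists_orthonormalBasis_extension_of_card_eq h
  refine ⟨b, fun i => ?_⟩
  by_cases hi : f i = 0
  · simp [hi]
  have hnorm : (‖f i‖ : 𝕜) ≠ 0 := by simpa using hi
  rw [hb i hi, inner_smul_left, inner_self_eq_norm_sq_to_K, map_inv₀, RCLike.conj_ofReal]
  field_simp

end OrthonormalBasis

namespace Matrix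

section Unitary

variable {𝕜 ι n : Type*} [RCLike 𝕜] [Fintype ι] [Fintype n] [DecidableEq n]

theorem trace_eq_sum_inner_toEuclideanLin (M : Matrix n n 𝕜)
    (e : OrthonormalBasis ι 𝕜 (EuclideanSpace 𝕜 n)) :
    M.trace = ∑ i, ⟪e i, toEuclideanLin M (e i)⟫_𝕜 := by
  rw [← LinearMap.trace_eq_sum_inner, toEuclideanLin_eq_toLin_orthonormal,
    LinearMap.trace_eq_matrix_trace 𝕜 (EuclideanSpace.basisFun n 𝕜).toBasis,
    LinearMap.toMatrix_toLin]

theorem trace_mul_eq_sum_inner (A B : Matrix n n 𝕜)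
    (e : OrthonormalBasis ι 𝕜 (EuclideanSpace 𝕜 n)) :
    (A * B).trace = ∑ i, ⟪toEuclideanLin Bᴴ (e i), toEuclideanLin A (e i)⟫_𝕜 := by
  rw [trace_mul_comm, trace_eq_sum_inner_toEuclideanLin _ e]
  simp [toEuclideanLin_conjTranspose_eq_adjoint, LinearMap.adjoint_inner_left]

theorem norm_toEuclideanLin_of_mem_unitaryGroup {U : Matrix n n 𝕜} (hU : U ∈ unitaryGroup n 𝕜)
    (x : EuclideanSpace 𝕜 n) : ‖toEuclideanLin U x‖ = ‖x‖ := by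
  rw [← sq_eq_sq₀ (norm_nonneg _) (norm_nonneg _), ← RCLike.ofReal_inj (K := 𝕜)]
  push_cast
  rw [← inner_self_eq_norm_sq_to_K, ← inner_self_eq_norm_sq_to_K, ← LinearMap.adjoint_inner_left,
    ← toEuclideanLin_conjTranspose_eq_adjoint, ← LinearMap.comp_apply, ← toLpLin_mul_same,
    ← star_eq_conjTranspose, mem_unitaryGroup_iff'.mp hU]
  simp

theorem exists_mem_unitaryGroup_toEuclideanLin_eq
    (e b : OrthonormalBasis ι 𝕜 (EuclideanSpace 𝕜 n)) :
    ∃ V ∈ unitaryGroup n 𝕜, ∀ i, toEuclideanLin V (e i) = b i := by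
  refine ⟨_, (e.equiv b (Equiv.refl ι)).toMatrix_mem_unitaryGroup
    (EuclideanSpace.basisFun n 𝕜) (EuclideanSpace.basisFun n 𝕜), fun i => ?_⟩
  rw [toEuclideanLin_eq_toLin_orthonormal]
  simp

theorem norm_trace_mul_le_sum_norm (A : Matrix n n 𝕜) {U : Matrix n n 𝕜}
    (hU : U ∈ unitaryGroup n 𝕜) (e : OrthonormalBasis ι 𝕜 (EuclideanSpace 𝕜 n)) :
    ‖(A * U).trace‖ ≤ ∑ i, ‖toEuclideanLin A (e i)‖ := by
  have hU_star : Uᴴ ∈ unitaryGroup n 𝕜 := Unitary.star_mem hU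
  rw [trace_mul_eq_sum_inner A U e]
  refine (norm_sum_le _ _).trans (Finset.sum_le_sum fun i _ => ?_)
  calc ‖⟪toEuclideanLin Uᴴ (e i), toEuclideanLin A (e i)⟫_𝕜‖
      ≤ ‖toEuclideanLin Uᴴ (e i)‖ * ‖toEuclideanLin A (e i)‖ := norm_inner_le_norm _ _
    _ = ‖toEuclideanLin A (e i)‖ := by
      rw [norm_toEuclideanLin_of_mem_unitaryGroup hU_star, e.orthonormal.1 i, one_mul]

theorem exists_mem_unitaryGroup_trace_mul_eq_sum_norm (A : Matrix n n 𝕜)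
    (e : OrthonormalBasis ι 𝕜 (EuclideanSpace 𝕜 n))
    (hA : Pairwise fun i j => ⟪toEuclideanLin A (e i), toEuclideanLin A (e j)⟫_𝕜 = 0) :
    ∃ U ∈ unitaryGroup n 𝕜, (A * U).trace = ∑ i, (‖toEuclideanLin A (e i)‖ : 𝕜) := by
  obtain ⟨b, hb⟩ := exists_orthonormalBasis_inner_eq_norm
    (Module.finrank_eq_card_basis e.toBasis) hA
  obtain ⟨V, hV, hVe⟩ := exists_mem_unitaryGroup_toEuclideanLin_eq e b
  refine ⟨Vᴴ, Unitary.star_mem hV, ?_⟩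
  simp only [trace_mul_eq_sum_inner A Vᴴ e, conjTranspose_conjTranspose, hVe, hb]

end Unitary

section SingularValues

variable {𝕜 m n : Type*} [RCLike 𝕜] [Fintype m] [Fintype n] [DecidableEq n]

theorem toEuclideanLin_conjTranspose_mul_self_eigenvectorBasis (A : Matrix m n 𝕜) (j : n) :
    toEuclideanLin (Aᴴ * A) ((isHermitian_conjTranspose_mul_self A).eigenvectorBasis j) =
      ((isHermitian_conjTranspose_mul_self A).eigenvalues j : 𝕜) •
        (isHermitian_conjTranspose_mul_self A).eigenvectorBasis j := by
  rw [toLpLin_apply, IsHermitian.mulVec_eigenvectorBasis,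
    RCLike.real_smul_eq_coe_smul (K := 𝕜)]
  rfl

theorem inner_toEuclideanLin_eigenvectorBasis_conjTranspose_mul_self (A : Matrix m n 𝕜)
    (i j : n) :
    ⟪toEuclideanLin A ((isHermitian_conjTranspose_mul_self A).eigenvectorBasis i),
        toEuclideanLin A ((isHermitian_conjTranspose_mul_self A).eigenvectorBasis j)⟫_𝕜 =
      if i = j then ((isHermitian_conjTranspose_mul_self A).eigenvalues i : 𝕜) else 0 := by
  classical
  rw [← LinearMap.adjoint_inner_right, ← toEuclideanLin_conjTranspose_eq_adjoint,
    ← LinearMap.comp_apply, ← toLpLin_mul_same,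
    toEuclideanLin_conjTranspose_mul_self_eigenvectorBasis, inner_smul_right,
    orthonormal_iff_ite.mp (OrthonormalBasis.orthonormal _)]
  split_ifs with h <;> simp [h]

theorem norm_toEuclideanLin_eigenvectorBasis_conjTranspose_mul_self (A : Matrix m n 𝕜) (i : n) :
    ‖toEuclideanLin A ((isHermitian_conjTranspose_mul_self A).eigenvectorBasis i)‖ =
      √((isHermitian_conjTranspose_mul_self A).eigenvalues i) := by
  have h := inner_toEuclideanLin_eigenvectorBasis_conjTranspose_mul_self A i i
  rw [if_pos rfl, inner_self_eq_norm_sq_to_K] at h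
  have h' : ‖toEuclideanLin A ((isHermitian_conjTranspose_mul_self A).eigenvectorBasis i)‖ ^ 2 =
      (isHermitian_conjTranspose_mul_self A).eigenvalues i := by exact_mod_cast h
  rw [← h', Real.sqrt_sq (norm_nonneg _)]

end SingularValues

section TraceMulUnitary

variable (𝕜 n : Type*) [RCLike 𝕜] [Fintype n] [DecidableEq n]

noncomputable def traceMulUnitary : Matrix n n 𝕜 →ₗ[𝕜] C(unitaryGroup n 𝕜, 𝕜) where
  toFun A := ⟨fun U => (A * U).trace, by fun_prop⟩
  map_add' A B := by ext U; simp [Matrix.add_mul]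
  map_smul' c A := by ext U; simp

variable {𝕜 n}

@[simp]
theorem traceMulUnitary_apply (A : Matrix n n 𝕜) (U : unitaryGroup n 𝕜) :
    traceMulUnitary 𝕜 n A U = (A * U).trace :=
  rfl

theorem range_traceMulUnitary :
    LinearMap.range (traceMulUnitary 𝕜 n) =
      Submodule.span 𝕜
        {g : C(unitaryGroup n 𝕜, 𝕜) | ∃ i j, ∀ U : unitaryGroup n 𝕜, g U = U.1 i j} := by
  rw [LinearMap.range_eq_map, ← (stdBasis 𝕜 n n).span_eq, Submodule.map_span, ← Set.range_comp]
  congr 1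
  ext g
  constructor
  · rintro ⟨⟨i, j⟩, rfl⟩
    exact ⟨j, i, fun U => by simp [stdBasis_eq_single, trace_single_mul]⟩
  · rintro ⟨i, j, hg⟩
    exact ⟨(j, i), by ext U; simp [stdBasis_eq_single, trace_single_mul, hg]⟩

end TraceMulUnitary

end Matrix

section TraceNorm

variable {n : ℕ}

theorem traceNorm_eq_sum_sqrt_eigenvalues (A : Matrix (Fin n) (Fin n) ℂ) :
    traceNorm n A = ∑ i, √((isHermitian_conjTranspose_mul_self A).eigenvalues i) := by
  rw [traceNorm, trace_mul_cycle, Unitary.coe_star_mul_self, Matrix.one_mul, trace_diagonal]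
  simp

theorem traceNorm_eq_sum_norm (A : Matrix (Fin n) (Fin n) ℂ) :
    traceNorm n A =
      ∑ i, ‖toEuclideanLin A ((isHermitian_conjTranspose_mul_self A).eigenvectorBasis i)‖ := by
  simp only [traceNorm_eq_sum_sqrt_eigenvalues,
    norm_toEuclideanLin_eigenvectorBasis_conjTranspose_mul_self]

theorem norm_trace_mul_le_traceNorm (A : Matrix (Fin n) (Fin n) ℂ)
    {U : Matrix (Fin n) (Fin n) ℂ} (hU : U ∈ unitaryGroup (Fin n) ℂ) :
    ‖(A * U).trace‖ ≤ traceNorm n A :=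
  traceNorm_eq_sum_norm A ▸ norm_trace_mul_le_sum_norm A hU _

theorem exists_mem_unitaryGroup_trace_mul_eq_traceNorm (A : Matrix (Fin n) (Fin n) ℂ) :
    ∃ U ∈ unitaryGroup (Fin n) ℂ, (A * U).trace = traceNorm n A := by
  obtain ⟨U, hU, h⟩ := exists_mem_unitaryGroup_trace_mul_eq_sum_norm A
    (isHermitian_conjTranspose_mul_self A).eigenvectorBasis fun i j hij => by
      simp [inner_toEuclideanLin_eigenvectorBasis_conjTranspose_mul_self, hij]
  exact ⟨U, hU, by rw [h, traceNorm_eq_sum_norm]; push_cast; rfl⟩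

theorem isGreatest_norm_trace_mul_unitary (A : Matrix (Fin n) (Fin n) ℂ) :
    IsGreatest (Set.range fun U : unitaryGroup (Fin n) ℂ => ‖(A * U).trace‖) (traceNorm n A) := by
  obtain ⟨U, hU, h⟩ := exists_mem_unitaryGroup_trace_mul_eq_traceNorm A
  have hnonneg : 0 ≤ traceNorm n A := by rw [traceNorm_eq_sum_norm]; positivity
  refine ⟨⟨⟨U, hU⟩, ?_⟩, ?_⟩
  · simp [h, hnonneg]
  · rintro _ ⟨V, rfl⟩
    exact norm_trace_mul_le_traceNorm A V.2

theorem eq_zero_of_traceNorm_eq_zero {A : Matrix (Fin n) (Fin n) ℂ} (h : traceNorm n A = 0) :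
    A = 0 := by
  rw [traceNorm_eq_sum_norm, Finset.sum_eq_zero_iff_of_nonneg fun i _ => norm_nonneg _] at h
  refine toEuclideanLin.map_eq_zero_iff.mp
    ((isHermitian_conjTranspose_mul_self A).eigenvectorBasis.toBasis.ext fun i => ?_)
  simpa using h i (Finset.mem_univ i)

end TraceNorm

/-- The map `A ↦ (U ↦ tr (A U))` is an isometric linear bijection from the
trace class `S₁(n)` onto the subspace of `C(U(n))` spanned by the coordinate functions
`e_{ij}`, where `S₁(n)` carries the trace norm and the subspace carries the supremum norm
over `U(n)`. -/
theorem traceClass_isometric_span_coordinate_functions (n : ℕ) :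
    ∃ Φ : Matrix (Fin n) (Fin n) ℂ →ₗ[ℂ] C(Matrix.unitaryGroup (Fin n) ℂ, ℂ),
      (∀ (A : Matrix (Fin n) (Fin n) ℂ) (U : Matrix.unitaryGroup (Fin n) ℂ),
        Φ A U = Matrix.trace (A * U.1)) ∧
      Function.Injective Φ ∧
      Set.range Φ = (Submodule.span ℂ {g : C(Matrix.unitaryGroup (Fin n) ℂ, ℂ) |
        ∃ i j, ∀ U : Matrix.unitaryGroup (Fin n) ℂ, g U = U.1 i j} : Set _) ∧
      (∀ A : Matrix (Fin n) (Fin n) ℂ,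
        (⨆ U : Matrix.unitaryGroup (Fin n) ℂ, ‖Φ A U‖) = traceNorm n A) := by
  refine ⟨traceMulUnitary ℂ (Fin n), traceMulUnitary_apply, ?_, ?_,
    fun A => (isGreatest_norm_trace_mul_unitary A).csSup_eq⟩
  · rw [injective_iff_map_eq_zero]
    intro A hA
    obtain ⟨U, hU, h⟩ := exists_mem_unitaryGroup_trace_mul_eq_traceNorm A
    apply eq_zero_of_traceNorm_eq_zero
    simpa [eq_comm] using (congrArg (· ⟨U, hU⟩) hA).symm.trans h
  · rw [← LinearMap.coe_range, range_traceMulUnitary]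
end

section
/- If the subspaces H_{(1,0)} = span{U ↦ u_{ij}} and H_{(0,1)} = span{U ↦ conj(u_{ij})} of L²(U(n)) are orthogonal, then the orthogonal projection onto their direct sum is given by convolution with n·tr + n·conj(tr), and its norm as an operator from C(U(n)) onto the sum equals 2n ∫_{U(n)} |Re(tr(V))| dV. -/
/-!
Left invariance of `μ` makes each matrix `M^{jl}_{ik} = ∫ u_{ij} conj u_{kl}` commute with every
unitary, so `M^{jl}` is scalar, and orthonormality of the columns of `V` fixes its trace: this is
Schur orthogonality `∫ u_{ij} conj u_{kl} = δ_{ik} δ_{jl} / n`. With the hypothesis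
`∫ u_{ij} u_{kl} = 0`, the functions `u_{ij}` and `conj u_{ij}` form an orthogonal system, each
of squared norm `1/n`, whose reproducing kernel
`n ∑ (u_{ij}(U) conj u_{ij}(V) + conj u_{ij}(U) u_{ij}(V))` is `n tr(U V*) + n conj tr(U V*)`.

This kernel is `2n Re tr(U V*)`, so the norm on `C(U(n))` is at most
`2n ∫ |Re tr(U V*)| dV = 2n ∫ |Re tr V| dV`. At `U = 1` the bound is attained up to `2n t` by
`x / (|x| + t)` with `x = Re tr V`, a continuous approximation of the sign of `x`.
-/

open MeasureTheory Matrix ComplexConjugate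

section FiniteOrthogonalSystem

variable {X ι : Type*} [MeasurableSpace X] {μ : Measure X} [Fintype ι] {e : ι → X → ℂ}

theorem integrable_mul_conj_of_memLp_two {f g : X → ℂ} (hf : MemLp f 2 μ) (hg : MemLp g 2 μ) :
    Integrable (fun x => f x * conj (g x)) μ :=
  hf.integrable_mul hg.star

variable (he : ∀ i, MemLp (e i) 2 μ)
include he

theorem integral_mul_conj_eq_zero_of_mem_span {g h : X → ℂ} (hg : MemLp g 2 μ)
    (hg₀ : ∀ i, ∫ x, g x * conj (e i x) ∂μ = 0) (hh : h ∈ Submodule.span ℂ (Set.range e)) :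
    ∫ x, g x * conj (h x) ∂μ = 0 := by
  obtain ⟨c, rfl⟩ := (Submodule.mem_span_range_iff_exists_fun ℂ).mp hh
  have hexpand : ∀ x, g x * conj ((∑ i, c i • e i) x) = ∑ i, conj (c i) * (g x * conj (e i x)) := by
    intro x
    simp only [Finset.sum_apply, Pi.smul_apply, smul_eq_mul, map_sum, map_mul, Finset.mul_sum]
    exact Fintype.sum_congr _ _ fun i => by ring
  simp only [hexpand]
  rw [integral_finsetSum _ fun i _ => (integrable_mul_conj_of_memLp_two hg (he i)).const_mul _]
  simp [integral_const_mul, hg₀]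

variable {f : X → ℂ} (hf : MemLp f 2 μ)
include hf

theorem integral_mul_kernel_eq_sum (w : ℂ) (x : X) :
    ∫ y, f y * (w * ∑ i, e i x * conj (e i y)) ∂μ
      = w * ∑ i, (∫ y, f y * conj (e i y) ∂μ) * e i x := by
  have hexpand : ∀ y, f y * (w * ∑ i, e i x * conj (e i y))
      = ∑ i, w * e i x * (f y * conj (e i y)) := by
    intro y
    rw [Finset.mul_sum, Finset.mul_sum]
    exact Fintype.sum_congr _ _ fun i => by ring
  simp only [hexpand]
  rw [integral_finsetSum _ fun i _ => (integrable_mul_conj_of_memLp_two hf (he i)).const_mul _,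
    Finset.mul_sum]
  exact Fintype.sum_congr _ _ fun i => by rw [integral_const_mul]; ring

theorem integral_mul_kernel_mem_span (w : ℂ) :
    (fun x => ∫ y, f y * (w * ∑ i, e i x * conj (e i y)) ∂μ)
      ∈ Submodule.span ℂ (Set.range e) := by
  refine (Submodule.mem_span_range_iff_exists_fun ℂ).mpr
    ⟨fun i => w * ∫ y, f y * conj (e i y) ∂μ, funext fun x => ?_⟩
  simp_rw [integral_mul_kernel_eq_sum he hf w]
  simp only [Finset.sum_apply, Pi.smul_apply, smul_eq_mul, Finset.mul_sum, mul_assoc]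

theorem memLp_integral_mul_kernel (w : ℂ) :
    MemLp (fun x => ∫ y, f y * (w * ∑ i, e i x * conj (e i y)) ∂μ) 2 μ := by
  simp_rw [integral_mul_kernel_eq_sum he hf w]
  exact (memLp_finsetSum _ fun i _ => (he i).const_mul _).const_mul w

theorem integral_sub_mul_kernel_mul_conj_eq_zero [DecidableEq ι] {w c : ℂ} (hwc : w * c = 1) (j : ι)
    (horth : ∀ i, ∫ x, e i x * conj (e j x) ∂μ = if i = j then c else 0) :
    ∫ x, (f x - ∫ y, f y * (w * ∑ i, e i x * conj (e i y)) ∂μ) * conj (e j x) ∂μ = 0 := by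
  simp_rw [integral_mul_kernel_eq_sum he hf w]
  have hexpand : ∀ (a : ι → ℂ) x, (f x - w * ∑ i, a i * e i x) * conj (e j x)
      = f x * conj (e j x) - ∑ i, w * a i * (e i x * conj (e j x)) := by
    intro a x
    rw [sub_mul, Finset.mul_sum, Finset.sum_mul]
    congr 1
    exact Fintype.sum_congr _ _ fun i => by ring
  simp only [hexpand]
  rw [integral_sub (integrable_mul_conj_of_memLp_two hf (he j)) (integrable_finsetSum _ fun i _ =>
      (integrable_mul_conj_of_memLp_two (he i) (he j)).const_mul _),
    integral_finsetSum _ fun i _ => (integrable_mul_conj_of_memLp_two (he i) (he j)).const_mul _]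
  simp only [integral_const_mul, horth, mul_ite, mul_zero, Finset.sum_ite_eq', Finset.mem_univ,
    if_true]
  rw [mul_right_comm, hwc, one_mul, sub_self]

end FiniteOrthogonalSystem

theorem integral_abs_sub_le_integral_div_abs_add_mul {X : Type*} [MeasurableSpace X]
    {μ : Measure X} [IsProbabilityMeasure μ] {g : X → ℝ} (hg : Integrable g μ) {t : ℝ}
    (ht : 0 < t) : ∫ x, |g x| ∂μ - t ≤ ∫ x, g x / (|g x| + t) * g x ∂μ := by
  have hpos : ∀ x, 0 < |g x| + t := fun x => by positivity
  have hint : Integrable (fun x => g x / (|g x| + t) * g x) μ := by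
    refine hg.abs.mono' ((hg.aemeasurable.div (hg.aemeasurable.abs.add_const t)).mul
      hg.aemeasurable).aestronglyMeasurable (.of_forall fun x => ?_)
    rw [Real.norm_eq_abs, abs_mul, abs_div, abs_of_pos (hpos x)]
    exact mul_le_of_le_one_left (abs_nonneg _) ((div_le_one (hpos x)).mpr (by linarith))
  calc ∫ x, |g x| ∂μ - t = ∫ x, (|g x| - t) ∂μ := by
        rw [integral_sub hg.abs (integrable_const t)]; simp
    _ ≤ _ := integral_mono (hg.abs.sub (integrable_const t)) hint fun x => by
        rw [div_mul_eq_mul_div, le_div_iff₀ (hpos x)]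
        nlinarith [sq_abs (g x), sq_nonneg t]

namespace Matrix

variable {m : Type*} [Fintype m] [DecidableEq m]

theorem permMatrix_mem_unitaryGroup (σ : Equiv.Perm m) :
    σ.permMatrix ℂ ∈ unitaryGroup m ℂ := by
  rw [mem_unitaryGroup_iff', star_eq_conjTranspose, conjTranspose_permMatrix,
    ← permMatrix_mul, mul_inv_cancel, permMatrix_one]

theorem single_mul_permMatrix_swap (i j : m) :
    single i i (1 : ℂ) * (Equiv.swap i j).permMatrix ℂ = single i j 1 := by
  ext a b
  rw [PEquiv.mul_toMatrix_toPEquiv]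
  simp [single_apply, eq_comm (a := i) (b := Equiv.swap i j _), Equiv.swap_apply_eq_iff,
    eq_comm (a := b)]

theorem one_sub_two_smul_single_mem_unitaryGroup (i : m) :
    1 - (2 : ℂ) • single i i 1 ∈ unitaryGroup m ℂ := by
  have hE : single i i (1 : ℂ) * single i i 1 = single i i 1 := by
    rw [single_mul_single_same, mul_one]
  rw [mem_unitaryGroup_iff', star_eq_conjTranspose, conjTranspose_sub, conjTranspose_one,
    conjTranspose_smul, conjTranspose_single, star_one, star_ofNat]
  simp only [sub_mul, mul_sub, one_mul, mul_one, hE, mul_smul_comm, smul_mul_assoc]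
  module

theorem mem_range_scalar_of_forall_commute_unitary {M : Matrix m m ℂ}
    (hM : ∀ W ∈ unitaryGroup m ℂ, Commute W M) : M ∈ Set.range (scalar m) := by
  refine mem_range_scalar_of_commute_single fun i j _ => ?_
  -- `single i j 1 = ½ (1 - R) P` with `R` the reflection in the `i`-th coordinate and `P` the
  -- transposition matrix of `i` and `j`, both unitary.
  have hsingle : single i i (1 : ℂ) = (2 : ℂ)⁻¹ • (1 - (1 - (2 : ℂ) • single i i 1)) := by
    module
  show Commute (single i j 1) M
  rw [← single_mul_permMatrix_swap, hsingle]
  exact (((Commute.one_left M).sub_left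
    (hM _ (one_sub_two_smul_single_mem_unitaryGroup i))).smul_left _).mul_left
    (hM _ (permMatrix_mem_unitaryGroup _))

end Matrix

section UnitaryGroup

variable {m : Type*} [Fintype m] [DecidableEq m]

theorem continuous_unitaryGroup_entry (i j : m) :
    Continuous fun V : unitaryGroup m ℂ => V.1 i j :=
  (continuous_apply_apply i j).comp continuous_subtype_val

theorem continuous_unitaryGroup_trace : Continuous fun V : unitaryGroup m ℂ => trace V.1 :=
  continuous_subtype_val.matrix_trace

theorem norm_trace_le_card (V : unitaryGroup m ℂ) : ‖trace V.1‖ ≤ Fintype.card m :=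
  calc ‖trace V.1‖ ≤ ∑ i, ‖V.1 i i‖ := norm_sum_le _ _
    _ ≤ ∑ _i : m, (1 : ℝ) := Finset.sum_le_sum fun i _ => entry_norm_bound_of_unitary V.2 i i
    _ = Fintype.card m := by simp

theorem re_trace_mul_conjTranspose_mul (U W : unitaryGroup m ℂ) :
    (trace (U.1 * ((U * W).1)ᴴ)).re = (trace W.1).re := by
  rw [UnitaryGroup.mul_val, conjTranspose_mul, ← Matrix.mul_assoc, trace_mul_comm,
    ← Matrix.mul_assoc, ← star_eq_conjTranspose, UnitaryGroup.star_mul_self, Matrix.one_mul,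
    trace_conjTranspose, RCLike.star_def, Complex.conj_re]

variable (m) in
def unitaryCoordinates : (m × m) ⊕ (m × m) → unitaryGroup m ℂ → ℂ :=
  Sum.elim (fun p V => V.1 p.1 p.2) (fun p V => conj (V.1 p.1 p.2))

theorem span_range_unitaryCoordinates :
    Submodule.span ℂ (Set.range (unitaryCoordinates m))
      = Submodule.span ℂ {g : unitaryGroup m ℂ → ℂ | ∃ i j, g = fun U => U.1 i j}
        ⊔ Submodule.span ℂ {g : unitaryGroup m ℂ → ℂ | ∃ i j, g = fun U => conj (U.1 i j)} := by
  rw [unitaryCoordinates, Set.Sum.elim_range, Submodule.span_union]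
  congr 2 <;> ext g <;> simp [eq_comm]

def traceKernel (U V : unitaryGroup m ℂ) : ℂ :=
  (Fintype.card m : ℂ) * trace (U.1 * (V.1)ᴴ)
    + (Fintype.card m : ℂ) * conj (trace (U.1 * (V.1)ᴴ))

theorem traceKernel_eq_sum (U V : unitaryGroup m ℂ) :
    traceKernel U V
      = Fintype.card m * ∑ q, unitaryCoordinates m q U * conj (unitaryCoordinates m q V) := by
  simp only [traceKernel, unitaryCoordinates, Fintype.sum_sum_type, Sum.elim_inl, Sum.elim_inr,
    Fintype.sum_prod_type, trace, diag_apply, mul_apply, conjTranspose_apply, RCLike.star_def,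
    map_sum, map_mul, Complex.conj_conj, mul_add]

theorem traceKernel_eq_ofReal (U V : unitaryGroup m ℂ) :
    traceKernel U V = ((2 * Fintype.card m * (trace (U.1 * (V.1)ᴴ)).re : ℝ) : ℂ) := by
  rw [traceKernel, ← mul_add, Complex.add_conj]
  push_cast
  ring

theorem norm_traceKernel (U V : unitaryGroup m ℂ) :
    ‖traceKernel U V‖ = 2 * Fintype.card m * |(trace (U.1 * (V.1)ᴴ)).re| := by
  rw [traceKernel_eq_ofReal, Complex.norm_real, Real.norm_eq_abs, abs_mul,
    abs_of_nonneg (by positivity : (0 : ℝ) ≤ 2 * Fintype.card m)]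

theorem norm_traceKernel_le (U V : unitaryGroup m ℂ) :
    ‖traceKernel U V‖ ≤ 2 * Fintype.card m * Fintype.card m := by
  have hUV : U.1 * (V.1)ᴴ = (U * V⁻¹).1 := by
    rw [UnitaryGroup.mul_val, UnitaryGroup.inv_val, star_eq_conjTranspose]
  rw [norm_traceKernel, hUV]
  gcongr
  exact (Complex.abs_re_le_norm _).trans (norm_trace_le_card _)

theorem continuous_traceKernel (U : unitaryGroup m ℂ) : Continuous (traceKernel U) := by
  have ht : Continuous fun V : unitaryGroup m ℂ => trace (U.1 * (V.1)ᴴ) :=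
    (continuous_const.matrix_mul continuous_subtype_val.matrix_conjTranspose).matrix_trace
  exact (continuous_const.mul ht).add (continuous_const.mul (Complex.continuous_conj.comp ht))

end UnitaryGroup

section HaarIntegrals

variable {m : Type*} [Fintype m] [DecidableEq m]
  [MeasurableSpace (unitaryGroup m ℂ)] [BorelSpace (unitaryGroup m ℂ)]
  {μ : Measure (unitaryGroup m ℂ)}

theorem memLp_unitaryGroup_entry [IsFiniteMeasure μ] (p : ENNReal) (i j : m) :
    MemLp (fun V : unitaryGroup m ℂ => V.1 i j) p μ :=
  .of_bound (continuous_unitaryGroup_entry i j).aestronglyMeasurable 1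
    (.of_forall fun V => entry_norm_bound_of_unitary V.2 i j)

theorem integrable_unitaryGroup_entry_mul_conj [IsFiniteMeasure μ] (i j k l : m) :
    Integrable (fun V : unitaryGroup m ℂ => V.1 i j * conj (V.1 k l)) μ :=
  (memLp_unitaryGroup_entry 2 i j).integrable_mul (memLp_unitaryGroup_entry 2 k l).star

theorem memLp_unitaryCoordinates [IsFiniteMeasure μ] (q : (m × m) ⊕ (m × m)) :
    MemLp (unitaryCoordinates m q) 2 μ := by
  rcases q with ⟨i, j⟩ | ⟨i, j⟩
  · exact memLp_unitaryGroup_entry 2 i j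
  · exact (memLp_unitaryGroup_entry 2 i j).star

theorem integrable_traceKernel [IsFiniteMeasure μ] (U : unitaryGroup m ℂ) :
    Integrable (traceKernel U) μ :=
  .of_bound (continuous_traceKernel U).aestronglyMeasurable _
    (.of_forall (norm_traceKernel_le U))

theorem integral_mul_traceKernel_mem_sup_span [IsFiniteMeasure μ] {f : unitaryGroup m ℂ → ℂ}
    (hf : MemLp f 2 μ) :
    (fun U => ∫ V, f V * traceKernel U V ∂μ)
      ∈ Submodule.span ℂ {g : unitaryGroup m ℂ → ℂ | ∃ i j, g = fun U => U.1 i j}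
        ⊔ Submodule.span ℂ {g : unitaryGroup m ℂ → ℂ | ∃ i j, g = fun U => conj (U.1 i j)} := by
  simp_rw [traceKernel_eq_sum]
  rw [← span_range_unitaryCoordinates]
  exact integral_mul_kernel_mem_span memLp_unitaryCoordinates hf _

variable (μ) in
noncomputable def columnCorrelation (j l : m) : Matrix m m ℂ :=
  of fun i k => ∫ V, V.1 i j * conj (V.1 k l) ∂μ

theorem trace_columnCorrelation [IsProbabilityMeasure μ] (j l : m) :
    trace (columnCorrelation μ j l) = if j = l then 1 else 0 := by
  rw [trace]
  simp only [diag_apply, columnCorrelation, of_apply]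
  rw [← integral_finsetSum _ fun i _ => integrable_unitaryGroup_entry_mul_conj i j i l]
  have hcol : ∀ V : unitaryGroup m ℂ, ∑ i, V.1 i j * conj (V.1 i l) = if j = l then 1 else 0 := by
    intro V
    have := congr_fun₂ (mem_unitaryGroup_iff'.mp V.2) l j
    simp only [mul_apply, star_apply, RCLike.star_def, one_apply] at this
    simp only [mul_comm (V.1 _ j), this, eq_comm]
  simp [hcol]

theorem le_norm_integral_mul_traceKernel_one [IsProbabilityMeasure μ] {t : ℝ} (ht : 0 < t) :
    2 * Fintype.card m * (∫ V, |(trace V.1).re| ∂μ - t)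
      ≤ ‖∫ V, (((trace V.1).re / (|(trace V.1).re| + t) : ℝ) : ℂ) * traceKernel 1 V ∂μ‖ := by
  have hre : Integrable (fun V : unitaryGroup m ℂ => (trace V.1).re) μ :=
    .of_bound (Complex.continuous_re.comp continuous_unitaryGroup_trace).aestronglyMeasurable
      (Fintype.card m) (.of_forall fun V =>
        (Complex.abs_re_le_norm _).trans (norm_trace_le_card V))
  have hker : ∀ V : unitaryGroup m ℂ,
      (((trace V.1).re / (|(trace V.1).re| + t) : ℝ) : ℂ) * traceKernel 1 V
        = ((2 * Fintype.card m * ((trace V.1).re / (|(trace V.1).re| + t) * (trace V.1).re) : ℝ)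
          : ℂ) := by
    intro V
    rw [traceKernel_eq_ofReal, UnitaryGroup.one_val, Matrix.one_mul, trace_conjTranspose,
      RCLike.star_def, Complex.conj_re]
    push_cast
    ring
  simp_rw [hker]
  rw [integral_complex_ofReal, Complex.norm_real, Real.norm_eq_abs, integral_const_mul]
  exact (mul_le_mul_of_nonneg_left (integral_abs_sub_le_integral_div_abs_add_mul hre ht)
    (by positivity)).trans (le_abs_self _)

variable [μ.IsMulLeftInvariant]

theorem columnCorrelation_eq_mul_mul_star [IsFiniteMeasure μ] (W : unitaryGroup m ℂ) (j l : m) :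
    columnCorrelation μ j l = W.1 * columnCorrelation μ j l * star W.1 := by
  ext i k
  have hmul : ∀ V : unitaryGroup m ℂ, (W * V).1 i j * conj ((W * V).1 k l)
      = ∑ a, ∑ b, W.1 i a * conj (W.1 k b) * (V.1 a j * conj (V.1 b l)) := by
    intro V
    simp only [UnitaryGroup.mul_val, mul_apply, map_sum, map_mul, Finset.sum_mul_sum]
    exact Fintype.sum_congr _ _ fun a => Fintype.sum_congr _ _ fun b => by ring
  rw [columnCorrelation, of_apply, ← integral_mul_left_eq_self _ W]
  simp only [hmul]
  rw [integral_finsetSum _ fun a _ => integrable_finsetSum _ fun b _ =>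
    (integrable_unitaryGroup_entry_mul_conj a j b l).const_mul _]
  simp only [mul_apply, of_apply, star_apply, RCLike.star_def, Finset.sum_mul]
  rw [Finset.sum_comm]
  refine Fintype.sum_congr _ _ fun a => ?_
  rw [integral_finsetSum _ fun b _ => (integrable_unitaryGroup_entry_mul_conj a j b l).const_mul _]
  exact Fintype.sum_congr _ _ fun b => by rw [integral_const_mul]; ring

theorem commute_columnCorrelation [IsFiniteMeasure μ] {W : Matrix m m ℂ}
    (hW : W ∈ unitaryGroup m ℂ) (j l : m) : Commute W (columnCorrelation μ j l) := by
  have hM := columnCorrelation_eq_mul_mul_star (μ := μ) ⟨W, hW⟩ j l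
  calc W * columnCorrelation μ j l = W * columnCorrelation μ j l * (star W * W) := by
        rw [mem_unitaryGroup_iff'.mp hW, Matrix.mul_one]
    _ = columnCorrelation μ j l * W := by rw [← Matrix.mul_assoc, ← hM]

theorem integral_entry_mul_conj_entry [IsProbabilityMeasure μ] (i j k l : m) :
    ∫ V, V.1 i j * conj (V.1 k l) ∂μ
      = if i = k ∧ j = l then (Fintype.card m : ℂ)⁻¹ else 0 := by
  obtain ⟨c, hc⟩ := mem_range_scalar_of_forall_commute_unitary fun W hW =>
    commute_columnCorrelation (μ := μ) hW j l
  have htrace := trace_columnCorrelation (μ := μ) j l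
  have hentry := congr_fun₂ hc i k
  rw [← hc] at htrace
  simp only [scalar_apply, trace_diagonal, Finset.sum_const, Finset.card_univ,
    nsmul_eq_mul] at htrace
  simp only [scalar_apply, diagonal_apply, columnCorrelation, of_apply] at hentry
  have : Nonempty m := ⟨i⟩
  have hcard : (Fintype.card m : ℂ) ≠ 0 := Nat.cast_ne_zero.mpr Fintype.card_ne_zero
  rw [← hentry, ← inv_mul_cancel_left₀ hcard c, htrace]
  by_cases hik : i = k <;> by_cases hjl : j = l <;> simp [hik, hjl]

theorem integral_unitaryCoordinates_mul_conj [IsProbabilityMeasure μ]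
    (horth : ∀ i j k l : m, ∫ U, U.1 i j * U.1 k l ∂μ = 0) (q r : (m × m) ⊕ (m × m)) :
    ∫ U, unitaryCoordinates m q U * conj (unitaryCoordinates m r U) ∂μ
      = if q = r then (Fintype.card m : ℂ)⁻¹ else 0 := by
  rcases q with ⟨i, j⟩ | ⟨i, j⟩ <;> rcases r with ⟨k, l⟩ | ⟨k, l⟩ <;>
    simp only [unitaryCoordinates, Sum.elim_inl, Sum.elim_inr, Complex.conj_conj]
  · simp [integral_entry_mul_conj_entry]
  · simp [horth]
  · simp_rw [← map_mul, integral_conj, horth, map_zero]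
    simp
  · have hconj : ∀ U : unitaryGroup m ℂ,
        conj (U.1 i j) * U.1 k l = conj (U.1 i j * conj (U.1 k l)) := fun U => by
      rw [map_mul, Complex.conj_conj]
    simp_rw [hconj, integral_conj, integral_entry_mul_conj_entry]
    split_ifs <;> simp_all

theorem integral_sub_integral_mul_traceKernel_mul_conj_eq_zero [IsProbabilityMeasure μ]
    (horth : ∀ i j k l : m, ∫ U, U.1 i j * U.1 k l ∂μ = 0)
    {f : unitaryGroup m ℂ → ℂ} (hf : MemLp f 2 μ) {h : unitaryGroup m ℂ → ℂ}
    (hh : h ∈ Submodule.span ℂ {g : unitaryGroup m ℂ → ℂ | ∃ i j, g = fun U => U.1 i j}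
        ⊔ Submodule.span ℂ {g : unitaryGroup m ℂ → ℂ | ∃ i j, g = fun U => conj (U.1 i j)}) :
    ∫ U, (f U - ∫ V, f V * traceKernel U V ∂μ) * conj (h U) ∂μ = 0 := by
  rw [← span_range_unitaryCoordinates] at hh
  simp_rw [traceKernel_eq_sum]
  refine integral_mul_conj_eq_zero_of_mem_span memLp_unitaryCoordinates
    (hf.sub (memLp_integral_mul_kernel memLp_unitaryCoordinates hf _)) (fun q => ?_) hh
  have : Nonempty m := by rcases q with ⟨i, _⟩ | ⟨i, _⟩ <;> exact ⟨i⟩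
  refine integral_sub_mul_kernel_mul_conj_eq_zero memLp_unitaryCoordinates hf
    (mul_inv_cancel₀ (Nat.cast_ne_zero.mpr Fintype.card_ne_zero)) q fun r => ?_
  exact integral_unitaryCoordinates_mul_conj horth r q

theorem integral_norm_traceKernel (U : unitaryGroup m ℂ) :
    ∫ V, ‖traceKernel U V‖ ∂μ = 2 * Fintype.card m * ∫ V, |(trace V.1).re| ∂μ := by
  simp_rw [norm_traceKernel]
  rw [integral_const_mul, ← integral_mul_left_eq_self _ U]
  simp_rw [re_trace_mul_conjTranspose_mul]

theorem norm_integral_mul_traceKernel_le [IsFiniteMeasure μ] {f : unitaryGroup m ℂ → ℂ}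
    (hf : ∀ V, ‖f V‖ ≤ 1) (U : unitaryGroup m ℂ) :
    ‖∫ V, f V * traceKernel U V ∂μ‖ ≤ 2 * Fintype.card m * ∫ V, |(trace V.1).re| ∂μ := by
  rw [← integral_norm_traceKernel U]
  refine norm_integral_le_of_norm_le (integrable_traceKernel U).norm (.of_forall fun V => ?_)
  rw [norm_mul]
  exact mul_le_of_le_one_left (norm_nonneg _) (hf V)

theorem iSup_norm_integral_mul_traceKernel [IsProbabilityMeasure μ] :
    ⨆ f : {f : C(unitaryGroup m ℂ, ℂ) // ∀ U, ‖f U‖ ≤ 1},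
        ⨆ U, ‖∫ V, f.1 V * traceKernel U V ∂μ‖
      = 2 * Fintype.card m * ∫ V, |(trace V.1).re| ∂μ := by
  have : Nonempty {f : C(unitaryGroup m ℂ, ℂ) // ∀ U, ‖f U‖ ≤ 1} := ⟨⟨0, fun U => by simp⟩⟩
  have hle (f : {f : C(unitaryGroup m ℂ, ℂ) // ∀ U, ‖f U‖ ≤ 1}) :=
    norm_integral_mul_traceKernel_le (μ := μ) f.2
  refine ciSup_eq_of_forall_le_of_forall_lt_exists_gt (fun f => ciSup_le (hle f)) fun w hw => ?_
  obtain ⟨t, ht, hwt⟩ := exists_pos_mul_lt (sub_pos.mpr hw) (2 * Fintype.card m)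
  have hre : Continuous fun V : unitaryGroup m ℂ => (trace V.1).re :=
    Complex.continuous_re.comp continuous_unitaryGroup_trace
  let f : C(unitaryGroup m ℂ, ℂ) :=
    ⟨fun V => (((trace V.1).re / (|(trace V.1).re| + t) : ℝ) : ℂ),
      Complex.continuous_ofReal.comp (hre.div (hre.abs.add continuous_const)
        fun V => (by positivity : 0 < |(trace V.1).re| + t).ne')⟩
  have hf : ∀ U, ‖f U‖ ≤ 1 := fun U => by
    have hpos : 0 < |(trace U.1).re| + t := by positivity
    rw [ContinuousMap.coe_mk, Complex.norm_real, Real.norm_eq_abs, abs_div, abs_of_pos hpos,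
      div_le_one hpos]
    linarith
  refine ⟨⟨f, hf⟩, ?_⟩
  calc w < 2 * Fintype.card m * (∫ V, |(trace V.1).re| ∂μ - t) := by linarith
    _ ≤ _ := le_norm_integral_mul_traceKernel_one ht
    _ ≤ _ := le_ciSup ⟨_, Set.forall_mem_range.2 (hle ⟨f, hf⟩)⟩ 1

end HaarIntegrals

/-- If the subspaces `H_{(1,0)} = span{U ↦ u_{ij}}` and
`H_{(0,1)} = span{U ↦ conj u_{ij}}` of `L²(U(n))` are orthogonal, then the orthogonal
projection onto their direct sum is given by convolution with `n·tr + n·conj tr`, and its norm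
as an operator on `C(U(n))` (sup norm) equals `2n ∫ |Re (tr V)| dV`. -/
theorem projection_sum_span_and_norm (n : ℕ)
    [MeasurableSpace (Matrix.unitaryGroup (Fin n) ℂ)]
    [BorelSpace (Matrix.unitaryGroup (Fin n) ℂ)]
    (μ : Measure (Matrix.unitaryGroup (Fin n) ℂ))
    [μ.IsHaarMeasure] [IsProbabilityMeasure μ]
    -- the two subspaces are orthogonal in `L²(U(n))`:
    (horth : ∀ i j k l : Fin n,
      ∫ U : Matrix.unitaryGroup (Fin n) ℂ, U.1 i j * U.1 k l ∂μ = 0) :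
    -- (a) convolution with `n·tr + n·conj tr` is the orthogonal projection onto the sum:
    (∀ f : Matrix.unitaryGroup (Fin n) ℂ → ℂ, MemLp f 2 μ →
      ((fun U : Matrix.unitaryGroup (Fin n) ℂ =>
          ∫ V, f V * ((n : ℂ) * Matrix.trace (U.1 * (V.1)ᴴ)
            + (n : ℂ) * (starRingEnd ℂ) (Matrix.trace (U.1 * (V.1)ᴴ))) ∂μ)
        ∈ (Submodule.span ℂ {g : Matrix.unitaryGroup (Fin n) ℂ → ℂ |
              ∃ i j, g = fun U => U.1 i j}
            ⊔ Submodule.span ℂ {g : Matrix.unitaryGroup (Fin n) ℂ → ℂ |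
              ∃ i j, g = fun U => (starRingEnd ℂ) (U.1 i j)})) ∧
      (∀ h ∈ (Submodule.span ℂ {g : Matrix.unitaryGroup (Fin n) ℂ → ℂ |
              ∃ i j, g = fun U => U.1 i j}
            ⊔ Submodule.span ℂ {g : Matrix.unitaryGroup (Fin n) ℂ → ℂ |
              ∃ i j, g = fun U => (starRingEnd ℂ) (U.1 i j)}),
        ∫ U, (f U - ∫ V, f V * ((n : ℂ) * Matrix.trace (U.1 * (V.1)ᴴ)
              + (n : ℂ) * (starRingEnd ℂ) (Matrix.trace (U.1 * (V.1)ᴴ))) ∂μ)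
            * (starRingEnd ℂ) (h U) ∂μ = 0)) ∧
    -- (b) the norm of the projection on `C(U(n))` equals `2n ∫ |Re (tr V)| dV`:
    (⨆ f : {f : C(Matrix.unitaryGroup (Fin n) ℂ, ℂ) // ∀ U, ‖f U‖ ≤ 1},
        ⨆ U : Matrix.unitaryGroup (Fin n) ℂ,
          ‖(∫ V, f.1 V * ((n : ℂ) * Matrix.trace (U.1 * (V.1)ᴴ)
            + (n : ℂ) * (starRingEnd ℂ) (Matrix.trace (U.1 * (V.1)ᴴ))) ∂μ)‖)
      = 2 * n * ∫ V : Matrix.unitaryGroup (Fin n) ℂ, |(Matrix.trace V.1).re| ∂μ := by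
  refine ⟨fun f hf => ⟨?_, fun h hh => ?_⟩, ?_⟩
  · simpa only [traceKernel, Fintype.card_fin] using integral_mul_traceKernel_mem_sup_span hf
  · simpa only [traceKernel, Fintype.card_fin] using
      integral_sub_integral_mul_traceKernel_mul_conj_eq_zero horth hf hh
  · simpa only [traceKernel, Fintype.card_fin] using iSup_norm_integral_mul_traceKernel (μ := μ)
end
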